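/- arXiv:math/9908146 — 2 statements merged into one kernel-verified Lean document; each statement's English description precedes it below -/
import Mathlib

section
/- For alpha + beta + 1 > 0 and every nonnegative integer n, ((1-x)/2)^n equals the sum over k from 0 to n of (-n)_k (alpha+k+1)_{n-k} (alpha+beta+2k+1) / (alpha+beta+k+1)_{n+1} times P_k^{(alpha,beta)}(x). -/
noncomputable def poch (a : ℝ) (k : ℕ) : ℝ := ∏ m ∈ Finset.range k, (a + m)

noncomputable def lag (α : ℝ) (n : ℕ) (x : ℝ) : ℝ :=
  ∑ k ∈ Finset.range (n + 1),
    (-1) ^ k * (poch (α + k + 1) (n - k) / (n - k).factorial) * x ^ k / k.factorial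

noncomputable def jacobi (α β : ℝ) (n : ℕ) (x : ℝ) : ℝ :=
  ∑ k ∈ Finset.range (n + 1),
    poch ((n : ℝ) + α + β + 1) k * poch (α + k + 1) (n - k) /
      (k.factorial * (n - k).factorial) * ((x - 1) / 2) ^ k

noncomputable def charlier (a : ℝ) (n : ℕ) (x : ℝ) : ℝ :=
  ∑ m ∈ Finset.range (n + 1),
    (∏ j ∈ Finset.range m, (x - (j : ℝ))) / m.factorial * (-a) ^ (n - m) / (n - m).factorial

/-!
Write `y = (x - 1) / 2`, expand each `P_k` in powers of `y` and exchange the two sums. Putting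
`k = j + i` and `n = j + m`, the coefficient of `y ^ j` becomes a multiple of
`∑ i, (-1)^i C(m,i) (b + 2i + 1) / (b + i + 1)_{m+1}` with `b = α + β + 2j`, and this sum is `δ_{m0}`:
`m` times its `i`-th term is `a_i - a_{i+1}` with `a_i = (-1)^i C(m,i) i / (b + i + 1)_m`, and
`a_0 = a_{m+1} = 0`.
-/

open Finset
open scoped Nat

lemma poch_eq_eval_ascPochhammer (a : ℝ) (k : ℕ) : poch a k = (ascPochhammer ℝ k).eval a := by
  induction k with
  | zero => simp [poch]
  | succ k ih => rw [poch, prod_range_succ, ← poch, ih, ascPochhammer_succ_eval]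

lemma poch_succ (a : ℝ) (k : ℕ) : poch a (k + 1) = poch a k * (a + k) :=
  prod_range_succ _ _

lemma poch_succ' (a : ℝ) (k : ℕ) : poch a (k + 1) = a * poch (a + 1) k := by
  simp [poch_eq_eval_ascPochhammer, ascPochhammer_succ_left]

lemma poch_add (a : ℝ) (i j : ℕ) : poch a (i + j) = poch a i * poch (a + i) j := by
  simp [poch_eq_eval_ascPochhammer, ← ascPochhammer_mul]

lemma poch_pos {a : ℝ} (ha : 0 < a) (k : ℕ) : 0 < poch a k := by
  rw [poch_eq_eval_ascPochhammer]
  exact ascPochhammer_pos k a ha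

lemma poch_neg_natCast (n k : ℕ) : poch (-(n : ℝ)) k = (-1) ^ k * n.descFactorial k := by
  rw [poch_eq_eval_ascPochhammer, ascPochhammer_eval_neg_eq_descPochhammer,
    descPochhammer_eval_eq_descFactorial]

lemma choose_mul_div_poch_telescope {b : ℝ} (hb : 0 < b + 1) {m i : ℕ} (hi : i ≤ m) :
    m * ((-1) ^ i * m.choose i * (b + 2 * i + 1) / poch (b + i + 1) (m + 1)) =
      (-1) ^ i * m.choose i * i / poch (b + i + 1) m -
        (-1) ^ (i + 1) * m.choose (i + 1) * (i + 1 : ℕ) / poch (b + (i + 1 : ℕ) + 1) m := by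
  have hchoose : (m.choose (i + 1) * (i + 1 : ℕ) : ℝ) = m.choose i * (m - i : ℝ) := by
    rw [← Nat.cast_sub hi]; exact_mod_cast Nat.choose_succ_right_eq m i
  have hlow : poch (b + i + 1) (m + 1) = poch (b + i + 1) m * (b + i + m + 1) := by
    rw [poch_succ]; ring_nf
  have hhigh : poch (b + i + 1) (m + 1) = (b + i + 1) * poch (b + (i + 1 : ℕ) + 1) m := by
    rw [poch_succ']; push_cast; ring_nf
  have hbi : 0 < b + i + 1 := by linarith [(Nat.cast_nonneg i : (0 : ℝ) ≤ i)]
  have hbim : b + i + m + 1 ≠ 0 := by linarith [(Nat.cast_nonneg m : (0 : ℝ) ≤ m)]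
  rw [mul_assoc ((-1 : ℝ) ^ (i + 1)), hchoose,
    eq_div_of_mul_eq hbim hlow.symm, eq_div_of_mul_eq hbi.ne' (hhigh.trans (mul_comm _ _)).symm]
  field_simp
  ring

lemma sum_choose_mul_div_poch {b : ℝ} (hb : 0 < b + 1) (m : ℕ) :
    ∑ i ∈ range (m + 1), (-1) ^ i * m.choose i * (b + 2 * i + 1) / poch (b + i + 1) (m + 1) =
      if m = 0 then 1 else 0 := by
  split_ifs with hm
  · subst hm
    simp [poch, hb.ne']
  · have hsum : (m : ℝ) * ∑ i ∈ range (m + 1),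
        (-1) ^ i * m.choose i * (b + 2 * i + 1) / poch (b + i + 1) (m + 1) = 0 := by
      rw [mul_sum, sum_congr rfl fun i hi =>
        choose_mul_div_poch_telescope hb (Nat.lt_succ_iff.mp (mem_range.mp hi)), sum_range_sub']
      simp
    simpa [hm] using hsum

lemma descFactorial_add_eq_choose_mul_choose (j i m : ℕ) :
    (j + m).descFactorial (j + i) = (j + m).choose j * m.choose i * (j ! * i !) := by
  have hchoose := Nat.choose_mul (n := j + m) (k := j + i) (s := j) (Nat.le_add_right j i)
  rw [Nat.add_sub_cancel_left, Nat.add_sub_cancel_left, Nat.choose_symm_add] at hchoose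
  rw [Nat.descFactorial_eq_factorial_mul_choose, ← Nat.add_choose_mul_factorial_mul_factorial,
    ← hchoose]
  ring

noncomputable def jacobiCoeff (α β : ℝ) (n k : ℕ) : ℝ :=
  poch ((n : ℝ) + α + β + 1) k * poch (α + k + 1) (n - k) / (k.factorial * (n - k).factorial)

lemma jacobi_eq_sum (α β : ℝ) (n : ℕ) (x : ℝ) :
    jacobi α β n x = ∑ k ∈ range (n + 1), jacobiCoeff α β n k * ((x - 1) / 2) ^ k :=
  rfl

noncomputable def jacobiInvCoeff (α β : ℝ) (n k : ℕ) : ℝ :=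
  poch (-(n : ℝ)) k * poch (α + k + 1) (n - k) * (α + β + 2 * k + 1) / poch (α + β + k + 1) (n + 1)

lemma jacobiInvCoeff_mul_jacobiCoeff {α β : ℝ} (h : 0 < α + β + 1) (j : ℕ) {i m : ℕ}
    (hi : i ≤ m) :
    jacobiInvCoeff α β (j + m) (j + i) * jacobiCoeff α β (j + i) j =
      (-1) ^ j * (j + m).choose j * poch (α + j + 1) m *
        ((-1) ^ i * m.choose i * (α + β + 2 * j + 2 * i + 1) /
          poch (α + β + 2 * j + i + 1) (m + 1)) := by
  have hsplit : poch (α + j + 1) i * poch (α + (j + i : ℕ) + 1) (m - i) = poch (α + j + 1) m := by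
    rw [← Nat.add_sub_cancel' hi, poch_add, Nat.add_sub_cancel' hi]; push_cast; ring_nf
  have hden : poch (α + β + (j + i : ℕ) + 1) (j + m + 1) =
      poch (α + β + (j + i : ℕ) + 1) j * poch (α + β + 2 * j + i + 1) (m + 1) := by
    rw [add_assoc j m 1, poch_add]; push_cast; ring_nf
  unfold jacobiInvCoeff jacobiCoeff
  rw [Nat.add_sub_add_left, Nat.add_sub_cancel_left, poch_neg_natCast,
    descFactorial_add_eq_choose_mul_choose, hden, ← hsplit, show ((j + i : ℕ) : ℝ) + α + β + 1 = α + β + (j + i : ℕ) + 1 by ring]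
  have hj0 : (0 : ℝ) ≤ j := Nat.cast_nonneg j
  have hi0 : (0 : ℝ) ≤ i := Nat.cast_nonneg i
  have hP : poch (α + β + (j + i : ℕ) + 1) j ≠ 0 := (poch_pos (by push_cast; linarith) j).ne'
  have hQ : poch (α + β + 2 * j + i + 1) (m + 1) ≠ 0 := (poch_pos (by linarith) _).ne'
  field_simp
  push_cast
  ring

lemma sum_jacobiInvCoeff_mul_jacobiCoeff {α β : ℝ} (h : 0 < α + β + 1) {j n : ℕ} (hj : j ≤ n) :
    ∑ k ∈ Ico j (n + 1), jacobiInvCoeff α β n k * jacobiCoeff α β k j =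
      if j = n then (-1) ^ n else 0 := by
  obtain ⟨m, rfl⟩ := Nat.exists_eq_add_of_le hj
  have hb : 0 < α + β + 2 * j + 1 := by linarith [(Nat.cast_nonneg j : (0 : ℝ) ≤ _)]
  rw [sum_Ico_eq_sum_range, show j + m + 1 - j = m + 1 by omega,
    sum_congr rfl fun i hi =>
      jacobiInvCoeff_mul_jacobiCoeff h j (Nat.lt_succ_iff.mp (mem_range.mp hi)),
    ← mul_sum, sum_choose_mul_div_poch hb m]
  rcases m with _ | m <;> simp [poch]

theorem stmt4 (α β x : ℝ) (h : α + β + 1 > 0) (n : ℕ) :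
    ((1 - x) / 2) ^ n =
      ∑ k ∈ Finset.range (n + 1),
        poch (-(n : ℝ)) k * poch (α + k + 1) (n - k) * (α + β + 2 * k + 1) /
          poch (α + β + k + 1) (n + 1) * jacobi α β k x := by
  set y := (x - 1) / 2
  calc ((1 - x) / 2) ^ n = ∑ j ∈ range (n + 1), y ^ j * if j = n then (-1) ^ n else 0 := by
        simp only [mul_ite, mul_zero, sum_ite_eq', mem_range, Nat.lt_succ_self, if_true,
          ← mul_pow, y]
        congr 1
        ring
    _ = ∑ j ∈ range (n + 1), y ^ j *
          ∑ k ∈ Ico j (n + 1), jacobiInvCoeff α β n k * jacobiCoeff α β k j :=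
        sum_congr rfl fun j hj =>
          by rw [sum_jacobiInvCoeff_mul_jacobiCoeff h (Nat.lt_succ_iff.mp (mem_range.mp hj))]
    _ = ∑ k ∈ range (n + 1), jacobiInvCoeff α β n k * jacobi α β k x := by
        simp only [jacobi_eq_sum, mul_sum, range_eq_Ico]
        rw [sum_Ico_Ico_comm]
        exact sum_congr rfl fun _ _ => sum_congr rfl fun _ _ => by ring
end

section
/- For every nonnegative integer n and arbitrary parameters p_n, q_n, the sum over k from 0 to n of L_k^{(alpha+p_n)}(x) L_{n-k}^{(-alpha-q_n)}(-x) equals (p_n - q_n + 2)_n / n!. -/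
/-!
With `(a)_r / r! = Ring.multichoose a r`, the Laguerre polynomial expands as
`L_n^{(a)}(x) = ∑_{i+r=n} (-x)^i / i! * multichoose (a+i+1) r`. Expanding the product
`L_k^{(a)}(x) L_l^{(b)}(-x)` this way and regrouping the four indices by `(i+j, r+s)`,
Chu–Vandermonde sums over `r+s = t` to `multichoose (a+b+i+j+2) t` and the binomial theorem
sums over `i+j = m` to `(-x+x)^m / m!`, so only `m = 0` survives. In generating-function terms:
`(1-t)^{-a-1} e^{-xt/(1-t)} · (1-t)^{-b-1} e^{xt/(1-t)} = (1-t)^{-a-b-2}`.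
-/

open Finset Polynomial

theorem Ring.multichoose_add {R : Type*} [CommRing R] [BinomialRing R] (r s : R) (n : ℕ) :
    multichoose (r + s) n = ∑ ij ∈ antidiagonal n, multichoose r ij.1 * multichoose s ij.2 := by
  have multichoose_eq_negOnePow_smul_choose (t : R) (k : ℕ) :
      multichoose t k = Int.negOnePow k • choose (-t) k := by
    rw [choose_neg', smul_smul, ← Int.negOnePow_add, Int.negOnePow_even _ (by simp), one_smul]
  rw [multichoose_eq_negOnePow_smul_choose, neg_add, add_choose_eq _ (Commute.all _ _), smul_sum]
  refine sum_congr rfl fun ij hij => ?_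
  rw [multichoose_eq_negOnePow_smul_choose, multichoose_eq_negOnePow_smul_choose,
    ← mem_antidiagonal.mp hij, Nat.cast_add, Int.negOnePow_add, smul_mul_smul_comm]

theorem sum_antidiagonal_pow_div_factorial_mul {K : Type*} [Field K] [CharZero K] (a b : K)
    (n : ℕ) :
    ∑ ij ∈ antidiagonal n, a ^ ij.1 / ij.1.factorial * (b ^ ij.2 / ij.2.factorial) =
      (a + b) ^ n / n.factorial := by
  simpa [PowerSeries.coeff_mul, PowerSeries.coeff_exp, div_eq_mul_inv, mul_assoc, mul_comm,
    mul_left_comm] using congrArg (PowerSeries.coeff n) (PowerSeries.exp_mul_exp_eq_exp_add a b)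

theorem Finset.Nat.sum_antidiagonal_sum_antidiagonal_comm {M : Type*} [AddCommMonoid M] (n : ℕ)
    (f : ℕ → ℕ → ℕ → ℕ → M) :
    ∑ kl ∈ antidiagonal n, ∑ ir ∈ antidiagonal kl.1, ∑ js ∈ antidiagonal kl.2,
        f ir.1 ir.2 js.1 js.2 =
      ∑ mt ∈ antidiagonal n, ∑ ij ∈ antidiagonal mt.1, ∑ rs ∈ antidiagonal mt.2,
        f ij.1 rs.1 ij.2 rs.2 := by
  simp only [sum_sigma']
  refine sum_nbij' (fun ⟨_, (i, r), (j, s)⟩ => ⟨(i + j, r + s), (i, j), (r, s)⟩)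
    (fun ⟨_, (i, j), (r, s)⟩ => ⟨(i + r, j + s), (i, r), (j, s)⟩) ?_ ?_ ?_ ?_ ?_ <;>
  · rintro ⟨⟨k, l⟩, ⟨i, r⟩, ⟨j, s⟩⟩ h
    obtain ⟨hn, rfl, rfl⟩ := by simpa only [mem_sigma, HasAntidiagonal.mem_antidiagonal] using h
    simp only [mem_sigma, HasAntidiagonal.mem_antidiagonal, and_true] <;> omega

theorem poch_eq_smeval_ascPochhammer (a : ℝ) (k : ℕ) :
    poch a k = (ascPochhammer ℕ k).smeval a := by
  induction k with
  | zero => simp [poch]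
  | succ k ih =>
    rw [poch, prod_range_succ, ← poch, ih, ascPochhammer_succ_right, smeval_mul]
    simp [smeval_natCast, smeval_X]

theorem poch_div_factorial (a : ℝ) (k : ℕ) : poch a k / k.factorial = Ring.multichoose a k := by
  rw [div_eq_iff (by positivity), poch_eq_smeval_ascPochhammer,
    ← Ring.factorial_nsmul_multichoose_eq_ascPochhammer, nsmul_eq_mul, mul_comm]

theorem lag_eq_sum_antidiagonal (α : ℝ) (n : ℕ) (x : ℝ) :
    lag α n x = ∑ ir ∈ antidiagonal n,
      (-x) ^ ir.1 / ir.1.factorial * Ring.multichoose (α + ir.1 + 1) ir.2 := by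
  rw [lag, ← Nat.sum_antidiagonal_eq_sum_range_succ
    (fun i r => (-1) ^ i * (poch (α + i + 1) r / r.factorial) * x ^ i / i.factorial)]
  refine sum_congr rfl fun ir _ => ?_
  rw [poch_div_factorial, neg_pow]
  ring

theorem sum_lag_mul_lag_neg (a b x : ℝ) (n : ℕ) :
    ∑ k ∈ range (n + 1), lag a k x * lag b (n - k) (-x) = Ring.multichoose (a + b + 2) n := by
  calc ∑ k ∈ range (n + 1), lag a k x * lag b (n - k) (-x)
      = ∑ kl ∈ antidiagonal n, ∑ ir ∈ antidiagonal kl.1, ∑ js ∈ antidiagonal kl.2,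
          (-x) ^ ir.1 / ir.1.factorial * Ring.multichoose (a + ir.1 + 1) ir.2 *
            (x ^ js.1 / js.1.factorial * Ring.multichoose (b + js.1 + 1) js.2) := by
        rw [← Nat.sum_antidiagonal_eq_sum_range_succ (fun k l => lag a k x * lag b l (-x))]
        simp only [lag_eq_sum_antidiagonal, neg_neg, sum_mul_sum]
    _ = ∑ mt ∈ antidiagonal n, ∑ ij ∈ antidiagonal mt.1, ∑ rs ∈ antidiagonal mt.2,
          (-x) ^ ij.1 / ij.1.factorial * Ring.multichoose (a + ij.1 + 1) rs.1 *
            (x ^ ij.2 / ij.2.factorial * Ring.multichoose (b + ij.2 + 1) rs.2) :=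
        Nat.sum_antidiagonal_sum_antidiagonal_comm n fun i r j s =>
          (-x) ^ i / i.factorial * Ring.multichoose (a + i + 1) r *
            (x ^ j / j.factorial * Ring.multichoose (b + j + 1) s)
    _ = ∑ mt ∈ antidiagonal n, ∑ ij ∈ antidiagonal mt.1,
          (-x) ^ ij.1 / ij.1.factorial * (x ^ ij.2 / ij.2.factorial) *
            Ring.multichoose (a + b + mt.1 + 2) mt.2 := by
        refine sum_congr rfl fun mt _ => sum_congr rfl fun ij hij => ?_
        rw [← mem_antidiagonal.mp hij, Nat.cast_add,
          show a + b + (ij.1 + ij.2 : ℝ) + 2 = (a + ij.1 + 1) + (b + ij.2 + 1) by ring,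
          Ring.multichoose_add, mul_sum]
        exact sum_congr rfl fun _ _ => by ring
    _ = ∑ mt ∈ antidiagonal n,
          (-x + x) ^ mt.1 / mt.1.factorial * Ring.multichoose (a + b + mt.1 + 2) mt.2 := by
        simp only [← sum_mul, sum_antidiagonal_pow_div_factorial_mul]
    _ = Ring.multichoose (a + b + 2) n := by
        rw [sum_eq_single_of_mem (0, n) (by simp)]
        · simp
        · rintro ⟨m, t⟩ hmt hne
          have hm : m ≠ 0 := by rintro rfl; simp_all
          simp [hm]

theorem stmt15 (α x : ℝ) (n : ℕ) (p q : ℝ) :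
    ∑ k ∈ Finset.range (n + 1), lag (α + p) k x * lag (-α - q) (n - k) (-x) =
      poch (p - q + 2) n / n.factorial := by
  rw [sum_lag_mul_lag_neg, poch_div_factorial]
  congr 1
  ring
end
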